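/- arXiv:1111.3609 — 2 statements merged into one kernel-verified Lean document; each statement's English description precedes it below -/
import Mathlib

section
/- Let p ≥ 5 be prime, b ∈ ℤ_p, and φ(x,y) = (y, x + y² + b). Suppose Q ∈ ℚ_p² is a periodic point of φ of exact period N. Then Q ∈ ℤ_p², and if M is the exact period of the reduction Q̃ ∈ 𝔽_p² under the reduced map φ̃, and r is the order of the multiplier matrix Λ(Q̃) = ∏_{i=0}^{M−1} J_{φ̃}(φ̃^{M−1−i}(Q̃)) in SL₂(𝔽_p), then N = dM for some divisor d of r. -/
/-!
Outside the unit ball the `y`-coordinate of a Hénon orbit is squared at each step, so a periodic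
orbit over `ℚ_[p]` stays in `ℤ_[p]²`.

Over `ℤ_[p]`, put `ψ = φ^[M r]`. The reduction of `Q` is fixed by `ψ`, and the Jacobian of `ψ` at
`Q` reduces to `Λ ^ r = 1`, so `ψ Q ≡ Q` and `Dψ Q ≡ 1` mod `p`; the same holds for every iterate
of `ψ`. For such a map an orbit of prime length `q` collapses: with `δ = ψ Q - Q`, a second-order
expansion gives `ψ^[q] Q - Q ≡ q δ + (∑_{j<q} j) (Dψ - 1) δ + (∑_{j<q} j²) R δ` modulo
`p⁻² ‖δ‖`, and both power sums are divisible by `p` when `q = p ≥ 5`, so `ψ^[q] Q = Q` forces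
`δ = 0`. Hence `Q` is a fixed point of `ψ`, i.e. `N ∣ M r`, while `M ∣ N` because reduction
commutes with `φ`.
-/

open Function Finset Matrix

section Ultrametric

variable {R : Type*} [NormedRing R] [IsUltrametricDist R] {m n : Type*} [Fintype m] [Fintype n]

theorem norm_mulVec_le_of_forall_norm_le {A : Matrix m n R} {s : ℝ} (hs : 0 ≤ s)
    (hA : ∀ i j, ‖A i j‖ ≤ s) (v : n → R) : ‖A *ᵥ v‖ ≤ s * ‖v‖ :=
  (pi_norm_le_iff_of_nonneg (by positivity)).2 fun i =>
    IsUltrametricDist.norm_sum_le_of_forall_le_of_nonneg (by positivity) fun j _ =>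
      (norm_mul_le _ _).trans <|
        mul_le_mul (hA i j) (norm_le_pi_norm v j) (norm_nonneg _) hs

theorem norm_add_le_of_le_of_le {S : Type*} [SeminormedAddGroup S] [IsUltrametricDist S]
    {x y : S} {c : ℝ} (hx : ‖x‖ ≤ c) (hy : ‖y‖ ≤ c) : ‖x + y‖ ≤ c :=
  (IsUltrametricDist.norm_add_le_max x y).trans (max_le hx hy)

end Ultrametric

namespace PadicInt

variable {p : ℕ} [Fact p.Prime] {ι : Type*} [Fintype ι]

theorem norm_pi_le_one (v : ι → ℤ_[p]) : ‖v‖ ≤ 1 :=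
  (pi_norm_le_iff_of_nonneg zero_le_one).2 fun i => norm_le_one (v i)

theorem norm_smul_le_norm (μ : ℤ_[p]) (v : ι → ℤ_[p]) : ‖μ • v‖ ≤ ‖v‖ := by
  rw [norm_smul]
  exact mul_le_of_le_one_left (norm_nonneg v) (norm_le_one μ)

theorem norm_mulVec_le_norm (A : Matrix ι ι ℤ_[p]) (v : ι → ℤ_[p]) : ‖A *ᵥ v‖ ≤ ‖v‖ := by
  simpa using norm_mulVec_le_of_forall_norm_le zero_le_one (fun i j => norm_le_one (A i j)) v

theorem norm_le_inv_of_norm_lt_one {x : ℤ_[p]} (hx : ‖x‖ < 1) : ‖x‖ ≤ (p : ℝ)⁻¹ := by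
  simpa using (norm_le_pow_iff_norm_lt_pow_add_one x (-1)).2 (by simpa using hx)

theorem norm_le_inv_of_toZMod_eq_zero {x : ℤ_[p]} (hx : toZMod x = 0) : ‖x‖ ≤ (p : ℝ)⁻¹ := by
  refine norm_le_inv_of_norm_lt_one ?_
  rwa [← RingHom.mem_ker, ker_toZMod, IsLocalRing.mem_maximalIdeal, mem_nonunits] at hx

end PadicInt

section OrbitProd

variable {α β M N : Type*} [Monoid M] [Monoid N]

/-- `orbitProd f J n x = J (f^[n-1] x) * ⋯ * J (f x) * J x`: for `J` the Jacobian of `f`, the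
chain rule makes this the Jacobian of `f^[n]` at `x`. -/
def orbitProd (f : α → α) (J : α → M) : ℕ → α → M
  | 0, _ => 1
  | n + 1, x => orbitProd f J n (f x) * J x

variable {f : α → α} {J : α → M}

theorem orbitProd_add (m n : ℕ) (x : α) :
    orbitProd f J (m + n) x = orbitProd f J m (f^[n] x) * orbitProd f J n x := by
  induction n generalizing x with
  | zero => simp [orbitProd]
  | succ n ih => rw [← add_assoc, orbitProd, ih, orbitProd, mul_assoc, iterate_succ_apply]

theorem orbitProd_mul_of_isPeriodicPt {n : ℕ} {x : α} (hx : IsPeriodicPt f n x) (k : ℕ) :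
    orbitProd f J (n * k) x = orbitProd f J n x ^ k := by
  induction k with
  | zero => simp [orbitProd]
  | succ k ih => rw [Nat.mul_succ, add_comm, orbitProd_add, hx.mul_const k, ih, pow_succ']

theorem orbitProd_eq_prod_range (n : ℕ) (x : α) :
    orbitProd f J n x = ((List.range n).map fun i => J (f^[n - 1 - i] x)).prod := by
  induction n generalizing x with
  | zero => simp [orbitProd]
  | succ n ih =>
    rw [orbitProd, ih, List.range_succ, List.map_append, List.prod_append]
    congr 1
    · refine congrArg List.prod (List.map_congr_left fun i hi => ?_)
      rw [← iterate_succ_apply]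
      congr 2
      have := List.mem_range.1 hi
      omega
    · simp

theorem orbitProd_map {F : Type*} [FunLike F M N] [MonoidHomClass F M N] (g : F) {f' : β → β}
    {J' : β → N} {π : α → β} (hπ : Semiconj π f f') (hJ : ∀ x, g (J x) = J' (π x)) (n : ℕ)
    (x : α) : g (orbitProd f J n x) = orbitProd f' J' n (π x) := by
  induction n generalizing x with
  | zero => simp [orbitProd]
  | succ n ih => rw [orbitProd, orbitProd, map_mul, ih, hJ, hπ]

end OrbitProd

section TaylorRemainder

variable {R : Type*} [Ring R] {ι : Type*} [Fintype ι]

def taylorRem (F : (ι → R) → ι → R) (A : Matrix ι ι R) (P h : ι → R) : ι → R :=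
  F (P + h) - F P - A *ᵥ h

@[simp]
theorem taylorRem_zero (F : (ι → R) → ι → R) (A : Matrix ι ι R) (P : ι → R) :
    taylorRem F A P 0 = 0 := by
  simp [taylorRem]

theorem apply_add_eq_taylorRem (F : (ι → R) → ι → R) (A : Matrix ι ι R) (P h : ι → R) :
    F (P + h) = F P + A *ᵥ h + taylorRem F A P h := by
  rw [taylorRem]; abel

theorem taylorRem_comp (F G : (ι → R) → ι → R) (A B : Matrix ι ι R) (P h : ι → R) :
    taylorRem (G ∘ F) (B * A) P h =
      B *ᵥ taylorRem F A P h + taylorRem G B (F P) (F (P + h) - F P) := by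
  simp only [taylorRem, Function.comp_apply, add_sub_cancel, mulVec_sub, ← mulVec_mulVec]
  abel

end TaylorRemainder

section QuadraticRemainder

variable {p : ℕ} [Fact p.Prime] {ι : Type*} [Fintype ι]

open PadicInt

/-- Polynomial maps with `ℤ_[p]` coefficients satisfy this, with `A` their Jacobian at `P`. -/
structure HasQuadraticRemainder (F : (ι → ℤ_[p]) → ι → ℤ_[p]) (A : Matrix ι ι ℤ_[p])
    (P : ι → ℤ_[p]) : Prop where
  norm_sub_le : ∀ h h', ‖taylorRem F A P h - taylorRem F A P h'‖ ≤ max ‖h‖ ‖h'‖ * ‖h - h'‖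
  norm_smul_sub_le :
    ∀ (μ : ℤ_[p]) h, ‖taylorRem F A P (μ • h) - μ ^ 2 • taylorRem F A P h‖ ≤ ‖h‖ ^ 3

namespace HasQuadraticRemainder

variable {F G : (ι → ℤ_[p]) → ι → ℤ_[p]} {A B : Matrix ι ι ℤ_[p]} {P : ι → ℤ_[p]}

theorem norm_le (hF : HasQuadraticRemainder F A P) (h : ι → ℤ_[p]) :
    ‖taylorRem F A P h‖ ≤ ‖h‖ ^ 2 := by
  simpa [sq] using hF.norm_sub_le h 0

theorem norm_apply_add_sub_apply_add_le (hF : HasQuadraticRemainder F A P) (h h' : ι → ℤ_[p]) :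
    ‖F (P + h) - F (P + h')‖ ≤ ‖h - h'‖ := by
  have hmax : max ‖h‖ ‖h'‖ ≤ 1 := max_le (norm_pi_le_one h) (norm_pi_le_one h')
  have : F (P + h) - F (P + h') = A *ᵥ (h - h') + (taylorRem F A P h - taylorRem F A P h') := by
    rw [apply_add_eq_taylorRem F A P h, apply_add_eq_taylorRem F A P h', mulVec_sub]; abel
  rw [this]
  exact norm_add_le_of_le_of_le (norm_mulVec_le_norm _ _)
    ((hF.norm_sub_le h h').trans (mul_le_of_le_one_left (norm_nonneg _) hmax))

theorem norm_apply_add_sub_apply_le (hF : HasQuadraticRemainder F A P) (h : ι → ℤ_[p]) :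
    ‖F (P + h) - F P‖ ≤ ‖h‖ := by
  simpa using hF.norm_apply_add_sub_apply_add_le h 0

theorem comp (hF : HasQuadraticRemainder F A P) (hG : HasQuadraticRemainder G B (F P)) :
    HasQuadraticRemainder (G ∘ F) (B * A) P := by
  set u : (ι → ℤ_[p]) → ι → ℤ_[p] := fun h => F (P + h) - F P
  have hu : ∀ h, ‖u h‖ ≤ ‖h‖ := hF.norm_apply_add_sub_apply_le
  refine ⟨fun h h' => ?_, fun μ h => ?_⟩
  · have hu' : ‖u h - u h'‖ ≤ ‖h - h'‖ := by
      simpa [u] using hF.norm_apply_add_sub_apply_add_le h h'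
    rw [taylorRem_comp, taylorRem_comp, add_sub_add_comm, ← mulVec_sub]
    refine norm_add_le_of_le_of_le ?_ ?_
    · exact (norm_mulVec_le_norm _ _).trans (hF.norm_sub_le h h')
    · exact (hG.norm_sub_le _ _).trans <| mul_le_mul (max_le_max (hu h) (hu h')) hu'
        (norm_nonneg _) (by positivity)
  · have hsplit : taylorRem (G ∘ F) (B * A) P (μ • h) - μ ^ 2 • taylorRem (G ∘ F) (B * A) P h =
        B *ᵥ (taylorRem F A P (μ • h) - μ ^ 2 • taylorRem F A P h) +
          (taylorRem G B (F P) (u (μ • h)) - taylorRem G B (F P) (μ • u h)) +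
          (taylorRem G B (F P) (μ • u h) - μ ^ 2 • taylorRem G B (F P) (u h)) := by
      rw [taylorRem_comp, taylorRem_comp, mulVec_sub, mulVec_smul, smul_add]; abel
    have hdiff : u (μ • h) - μ • u h = taylorRem F A P (μ • h) - μ • taylorRem F A P h := by
      simp only [u, apply_add_eq_taylorRem F A P, mulVec_smul]; module
    have hquad : ‖u (μ • h) - μ • u h‖ ≤ ‖h‖ ^ 2 := by
      rw [hdiff, sub_eq_add_neg]
      refine norm_add_le_of_le_of_le ?_ ?_
      · exact (hF.norm_le _).trans (pow_le_pow_left₀ (norm_nonneg _) (norm_smul_le_norm μ h) 2)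
      · exact (norm_neg _).trans_le ((norm_smul_le_norm _ _).trans (hF.norm_le h))
    rw [hsplit]
    refine norm_add_le_of_le_of_le (norm_add_le_of_le_of_le ?_ ?_) ?_
    · exact (norm_mulVec_le_norm _ _).trans (hF.norm_smul_sub_le μ h)
    · refine (hG.norm_sub_le _ _).trans ?_
      rw [pow_succ']
      refine mul_le_mul (max_le ?_ ?_) hquad (norm_nonneg _) (norm_nonneg _)
      · exact (hu _).trans (norm_smul_le_norm μ h)
      · exact (norm_smul_le_norm μ _).trans (hu h)
    · exact (hG.norm_smul_sub_le μ (u h)).trans (pow_le_pow_left₀ (norm_nonneg _) (hu h) 3)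

end HasQuadraticRemainder

variable [DecidableEq ι]

theorem hasQuadraticRemainder_id (P : ι → ℤ_[p]) : HasQuadraticRemainder id 1 P := by
  have hrem : ∀ h, taylorRem id (1 : Matrix ι ι ℤ_[p]) P h = 0 := fun h => by simp [taylorRem]
  exact ⟨fun h h' => by simp [hrem]; positivity, fun μ h => by simp [hrem]⟩

theorem HasQuadraticRemainder.iterate {F : (ι → ℤ_[p]) → ι → ℤ_[p]}
    {J : (ι → ℤ_[p]) → Matrix ι ι ℤ_[p]}
    (hF : ∀ P, HasQuadraticRemainder F (J P) P) (n : ℕ) (P : ι → ℤ_[p]) :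
    HasQuadraticRemainder F^[n] (orbitProd F J n P) P := by
  induction n generalizing P with
  | zero => exact hasQuadraticRemainder_id P
  | succ n ih => rw [iterate_succ, orbitProd]; exact (hF P).comp (ih (F P))

end QuadraticRemainder

theorem ZMod.sum_range_natCast_pow {p : ℕ} [Fact p.Prime] {k : ℕ} (hk : k + 1 < p) :
    ∑ j ∈ range p, (j : ZMod p) ^ k = 0 := by
  rw [← FiniteField.sum_pow_lt_card_sub_one (ZMod p) k (by rw [ZMod.card]; omega)]
  exact Finset.sum_nbij' (fun j => (j : ZMod p)) ZMod.val (by simp) (by simp [ZMod.val_lt])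
    (fun j hj => ZMod.val_cast_of_lt (mem_range.1 hj)) (fun x _ => ZMod.natCast_zmod_val x)
    (fun _ _ => rfl)

namespace PadicInt

variable {p : ℕ} [Fact p.Prime]

theorem inv_le_norm_natCast_of_prime {q : ℕ} (hq : q.Prime) : (p : ℝ)⁻¹ ≤ ‖(q : ℤ_[p])‖ := by
  obtain rfl | hqp := eq_or_ne q p
  · rw [norm_p]
  · rw [norm_natCast_eq_one_iff.2 ((Nat.coprime_primes Fact.out hq).2 hqp.symm)]
    exact inv_le_one_of_one_le₀ (mod_cast (Fact.out : p.Prime).one_lt.le)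

theorem norm_sum_range_pow_le_norm_natCast {k q : ℕ} (hk : k + 1 < p) (hq : q.Prime) :
    ‖∑ j ∈ range q, (j : ℤ_[p]) ^ k‖ ≤ ‖(q : ℤ_[p])‖ := by
  obtain rfl | hqp := eq_or_ne q p
  · rw [norm_p]
    apply norm_le_inv_of_toZMod_eq_zero
    simpa only [map_sum, map_pow, map_natCast] using ZMod.sum_range_natCast_pow hk
  · rw [norm_natCast_eq_one_iff.2 ((Nat.coprime_primes Fact.out hq).2 hqp.symm)]
    exact norm_le_one _

end PadicInt

section PrimePeriod

variable {p : ℕ} [Fact p.Prime] {ι : Type*} [Fintype ι] [DecidableEq ι]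
  {ψ : (ι → ℤ_[p]) → ι → ℤ_[p]} {A : Matrix ι ι ℤ_[p]} {Q : ι → ℤ_[p]}

open PadicInt

/-- With `δ = ψ Q - Q` and `R` the Taylor remainder of `ψ` at `Q`, this unrolls the recursion
`ψ^[i+1] Q - Q = δ + A (ψ^[i] Q - Q) + R (ψ^[i] Q - Q)` to second order in `δ`. -/
noncomputable def orbitApprox (ψ : (ι → ℤ_[p]) → ι → ℤ_[p]) (A : Matrix ι ι ℤ_[p])
    (Q : ι → ℤ_[p]) (i : ℕ) : ι → ℤ_[p] :=
  (i : ℤ_[p]) • (ψ Q - Q) + (∑ j ∈ range i, (j : ℤ_[p])) • ((A - 1) *ᵥ (ψ Q - Q)) +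
    (∑ j ∈ range i, (j : ℤ_[p]) ^ 2) • taylorRem ψ A Q (ψ Q - Q)

theorem iterate_succ_sub_sub_orbitApprox (i : ℕ) :
    ψ^[i + 1] Q - Q - orbitApprox ψ A Q (i + 1) =
      (ψ^[i] Q - Q - orbitApprox ψ A Q i) + (A - 1) *ᵥ (ψ^[i] Q - Q - (i : ℤ_[p]) • (ψ Q - Q)) +
        (taylorRem ψ A Q (ψ^[i] Q - Q) - taylorRem ψ A Q ((i : ℤ_[p]) • (ψ Q - Q))) +
        (taylorRem ψ A Q ((i : ℤ_[p]) • (ψ Q - Q)) -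
          (i : ℤ_[p]) ^ 2 • taylorRem ψ A Q (ψ Q - Q)) := by
  have hψi : ψ^[i + 1] Q = ψ Q + A *ᵥ (ψ^[i] Q - Q) + taylorRem ψ A Q (ψ^[i] Q - Q) := by
    rw [iterate_succ_apply', ← apply_add_eq_taylorRem, add_sub_cancel]
  rw [hψi]
  simp only [orbitApprox, sum_range_succ, Nat.cast_succ, sub_mulVec, one_mulVec, mulVec_sub,
    mulVec_smul]
  module

theorem norm_iterate_sub_sub_orbitApprox_le (hψ : HasQuadraticRemainder ψ A Q)
    (hA : ∀ v, ‖(A - 1) *ᵥ v‖ ≤ (p : ℝ)⁻¹ * ‖v‖) (hQ : ‖ψ Q - Q‖ ≤ (p : ℝ)⁻¹) (i : ℕ) :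
    ‖ψ^[i] Q - Q - orbitApprox ψ A Q i‖ ≤ (p : ℝ)⁻¹ * ((p : ℝ)⁻¹ * ‖ψ Q - Q‖) := by
  set ε : ℝ := (p : ℝ)⁻¹
  set δ := ψ Q - Q
  set s := ‖δ‖
  set R := taylorRem ψ A Q
  have hε : ε ≤ 1 := inv_le_one_of_one_le₀ (mod_cast (Fact.out : p.Prime).one_lt.le)
  have hεs : ε * s ≤ s := mul_le_of_le_one_left (norm_nonneg _) hε
  have hRδ : ‖R δ‖ ≤ ε * s := (hψ.norm_le δ).trans (by rw [sq]; gcongr)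
  induction i with
  | zero => simp [orbitApprox]; positivity
  | succ i ih =>
    set w := ψ^[i] Q - Q
    have hw : ‖w - (i : ℤ_[p]) • δ‖ ≤ ε * s := by
      have : w - (i : ℤ_[p]) • δ = (w - orbitApprox ψ A Q i) +
          ((∑ j ∈ range i, (j : ℤ_[p])) • ((A - 1) *ᵥ δ) +
            (∑ j ∈ range i, (j : ℤ_[p]) ^ 2) • R δ) := by
        simp only [orbitApprox]; abel
      rw [this]
      refine norm_add_le_of_le_of_le (ih.trans (mul_le_of_le_one_left (by positivity) hε))
        (norm_add_le_of_le_of_le ?_ ?_)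
      · exact (norm_smul_le_norm _ _).trans (hA δ)
      · exact (norm_smul_le_norm _ _).trans hRδ
    have hiδ : ‖(i : ℤ_[p]) • δ‖ ≤ s := norm_smul_le_norm _ _
    have hw' : ‖w‖ ≤ s := by
      rw [← sub_add_cancel w ((i : ℤ_[p]) • δ)]
      exact norm_add_le_of_le_of_le (hw.trans hεs) hiδ
    rw [iterate_succ_sub_sub_orbitApprox]
    refine norm_add_le_of_le_of_le (norm_add_le_of_le_of_le (norm_add_le_of_le_of_le ih ?_) ?_) ?_
    · exact (hA _).trans (by gcongr)
    · refine (hψ.norm_sub_le _ _).trans ?_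
      calc max ‖w‖ ‖(i : ℤ_[p]) • δ‖ * ‖w - (i : ℤ_[p]) • δ‖ ≤ s * (ε * s) := by
            gcongr
            exact max_le hw' hiδ
        _ ≤ ε * (ε * s) := by gcongr
    · refine (hψ.norm_smul_sub_le _ _).trans ?_
      calc s ^ 3 = s * (s * s) := by ring
        _ ≤ ε * (ε * s) := by gcongr

theorem isFixedPt_of_isPeriodicPt_prime (hp : 5 ≤ p) (hψ : HasQuadraticRemainder ψ A Q)
    (hA : ∀ v, ‖(A - 1) *ᵥ v‖ ≤ (p : ℝ)⁻¹ * ‖v‖) (hQ : ‖ψ Q - Q‖ ≤ (p : ℝ)⁻¹) {q : ℕ}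
    (hq : q.Prime) (hper : IsPeriodicPt ψ q Q) : IsFixedPt ψ Q := by
  by_contra hne
  set ε : ℝ := (p : ℝ)⁻¹
  set δ := ψ Q - Q with hδ
  set s := ‖δ‖
  set κ := ‖(q : ℤ_[p])‖
  have hs : 0 < s := norm_pos_iff.2 (sub_ne_zero.2 hne)
  have hε : ε < 1 := inv_lt_one_of_one_lt₀ (mod_cast (Fact.out : p.Prime).one_lt)
  have hεκ : ε ≤ κ := inv_le_norm_natCast_of_prime hq
  have happrox := norm_iterate_sub_sub_orbitApprox_le hψ hA hQ q
  rw [hper.eq, sub_self, zero_sub, norm_neg] at happrox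
  -- For `q ≠ p` the coefficients below are harmless since `κ = 1`; for `q = p` they are
  -- divisible by `p` because `p ≥ 5`.
  have hrest : ‖(∑ j ∈ range q, (j : ℤ_[p])) • ((A - 1) *ᵥ δ) +
      (∑ j ∈ range q, (j : ℤ_[p]) ^ 2) • taylorRem ψ A Q δ‖ ≤ κ * (ε * s) := by
    refine norm_add_le_of_le_of_le ?_ ?_ <;> rw [norm_smul]
    · exact mul_le_mul (by simpa using norm_sum_range_pow_le_norm_natCast (k := 1) (by omega) hq)
        (hA δ) (norm_nonneg _) (norm_nonneg _)
    · refine mul_le_mul (norm_sum_range_pow_le_norm_natCast (by omega) hq) ?_ (norm_nonneg _)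
        (norm_nonneg _)
      exact (hψ.norm_le δ).trans (by rw [sq]; gcongr)
  have hκs : κ * s ≤ κ * (ε * s) := by
    calc κ * s = ‖orbitApprox ψ A Q q - ((∑ j ∈ range q, (j : ℤ_[p])) • ((A - 1) *ᵥ δ) +
          (∑ j ∈ range q, (j : ℤ_[p]) ^ 2) • taylorRem ψ A Q δ)‖ := by
          rw [orbitApprox, ← hδ, add_assoc, add_sub_cancel_right, norm_smul]
      _ ≤ κ * (ε * s) := by
        rw [sub_eq_add_neg]
        refine norm_add_le_of_le_of_le (happrox.trans ?_) ((norm_neg _).trans_le hrest)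
        gcongr
  have hκ : 0 < κ := (inv_pos.2 (mod_cast (Fact.out : p.Prime).pos)).trans_le hεκ
  nlinarith [mul_pos hκ hs]

end PrimePeriod

theorem Function.isFixedPt_of_mem_periodicPts {α : Type*} {f : α → α} {x : α}
    (hx : x ∈ periodicPts f)
    (h : ∀ k q, q.Prime → IsPeriodicPt f (k * q) x → IsPeriodicPt f k x) :
    IsFixedPt f x := by
  rw [← minimalPeriod_eq_one_iff_isFixedPt]
  by_contra ht
  set t := minimalPeriod f x
  have ht0 : 0 < t := minimalPeriod_pos_of_mem_periodicPts hx
  have hq := Nat.minFac_prime ht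
  have hqt : t / t.minFac * t.minFac = t := Nat.div_mul_cancel (Nat.minFac_dvd t)
  have hk : 0 < t / t.minFac := Nat.div_pos (Nat.minFac_le ht0) hq.pos
  refine not_isPeriodicPt_of_pos_of_lt_minimalPeriod hk.ne' (Nat.div_lt_self ht0 hq.one_lt) ?_
  exact h _ _ hq (by rw [hqt]; exact isPeriodicPt_minimalPeriod f x)

theorem Function.IsPeriodicPt.minimalPeriod_eq {α : Type*} {f : α → α} {x : α} {n : ℕ}
    (hn : 0 < n) (hx : IsPeriodicPt f n x) (hmin : ∀ m, 0 < m → IsPeriodicPt f m x → n ≤ m) :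
    minimalPeriod f x = n :=
  le_antisymm (hx.minimalPeriod_le hn)
    (hmin _ (hx.minimalPeriod_pos hn) (isPeriodicPt_minimalPeriod f x))

theorem Function.Semiconj.minimalPeriod_eq {α β : Type*} {g : α → β} {fa : α → α} {fb : β → β}
    (h : Semiconj g fa fb) (hg : Injective g) (x : α) :
    minimalPeriod fb (g x) = minimalPeriod fa x :=
  minimalPeriod_eq_minimalPeriod_iff.2 fun _ =>
    ⟨fun hx => hg ((h.iterate_right _ x).trans hx), fun hx => hx.map h⟩

section Reduction

variable {p : ℕ} [Fact p.Prime] {ι : Type*} [Fintype ι] [DecidableEq ι]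

open PadicInt

theorem norm_sub_one_apply_le_of_mapMatrix_eq_one {A : Matrix ι ι ℤ_[p]}
    (hA : (toZMod : ℤ_[p] →+* ZMod p).mapMatrix A = 1) (i j : ι) :
    ‖(A - 1) i j‖ ≤ (p : ℝ)⁻¹ := by
  apply norm_le_inv_of_toZMod_eq_zero
  have : (toZMod : ℤ_[p] →+* ZMod p).mapMatrix (A - 1) = 0 := by rw [map_sub, map_one, hA, sub_self]
  simpa using congrFun (congrFun this i) j

theorem isFixedPt_iterate_mul_orderOf (hp : 5 ≤ p) {β : Type*} {F : (ι → ℤ_[p]) → ι → ℤ_[p]}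
    {J : (ι → ℤ_[p]) → Matrix ι ι ℤ_[p]} (hF : ∀ P, HasQuadraticRemainder F (J P) P)
    {f : β → β} {J' : β → Matrix ι ι (ZMod p)} {π : (ι → ℤ_[p]) → β} (hπ : Semiconj π F f)
    (hπp : ∀ P P', π P = π P' → ‖P - P'‖ ≤ (p : ℝ)⁻¹)
    (hJ : ∀ P, (toZMod : ℤ_[p] →+* ZMod p).mapMatrix (J P) = J' (π P))
    {Q : ι → ℤ_[p]} (hQ : Q ∈ periodicPts F) {M : ℕ} (hM : IsPeriodicPt f M (π Q)) :
    IsFixedPt F^[M * orderOf (orbitProd f J' M (π Q))] Q := by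
  set L := M * orderOf (orbitProd f J' M (π Q))
  obtain ⟨n, hn, hQn⟩ := hQ
  refine isFixedPt_of_mem_periodicPts (mk_mem_periodicPts hn (hQn.iterate L))
    fun k q hq hper => ?_
  rw [IsPeriodicPt, ← iterate_mul] at hper ⊢
  have hLk : IsPeriodicPt f (L * k) (π Q) := by rw [mul_assoc]; exact hM.mul_const _
  refine isFixedPt_of_isPeriodicPt_prime hp (HasQuadraticRemainder.iterate hF _ Q) (fun v => ?_)
    (hπp _ _ ((hπ.iterate_right _ Q).trans hLk)) hq
    (by rwa [IsPeriodicPt, ← iterate_mul, mul_assoc])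
  refine norm_mulVec_le_of_forall_norm_le (by positivity)
    (norm_sub_one_apply_le_of_mapMatrix_eq_one ?_) v
  rw [orbitProd_map _ hπ hJ, mul_assoc, orbitProd_mul_of_isPeriodicPt hM, pow_mul,
    pow_orderOf_eq_one, one_pow]

end Reduction

/-- Points of the plane are vectors `Fin 2 → R`, so that Jacobians act by `mulVec`; `pairMap`
transports them to the pairs used in the statement. -/
def pairMap {R S : Type*} (f : R → S) (v : Fin 2 → R) : S × S := (f (v 0), f (v 1))

theorem pairMap_injective {R S : Type*} {f : R → S} (hf : Injective f) :
    Injective (pairMap f) := by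
  intro v w h
  simp only [pairMap, Prod.mk.injEq] at h
  ext i
  fin_cases i
  exacts [hf h.1, hf h.2]

section Henon

variable {R S : Type*} [CommRing R] [CommRing S]

def henon (b : R) (v : Fin 2 → R) : Fin 2 → R := ![v 1, v 0 + v 1 ^ 2 + b]

def henonJac (v : Fin 2 → R) : Matrix (Fin 2) (Fin 2) R := !![0, 1; 1, 2 * v 1]

theorem semiconj_pairMap_henon (f : R →+* S) (b : R) {g : S × S → S × S}
    (hg : ∀ P, g P = (P.2, P.1 + P.2 ^ 2 + f b)) : Semiconj (pairMap f) (henon b) g := by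
  intro v
  simp [hg, pairMap, henon]

theorem taylorRem_henon (b : R) (P h : Fin 2 → R) :
    taylorRem (henon b) (henonJac P) P h = ![0, h 1 ^ 2] := by
  ext i
  fin_cases i
  · simp [taylorRem, henon, henonJac, dotProduct, Fin.sum_univ_two]
  · simp [taylorRem, henon, henonJac, dotProduct, Fin.sum_univ_two]; ring

end Henon

section HenonPadic

variable {p : ℕ} [Fact p.Prime]

open PadicInt

theorem hasQuadraticRemainder_henon (b : ℤ_[p]) (P : Fin 2 → ℤ_[p]) :
    HasQuadraticRemainder (henon b) (henonJac P) P := by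
  refine ⟨fun h h' => ?_, fun μ h => ?_⟩
  · have hmax : ‖h 1 + h' 1‖ ≤ max ‖h‖ ‖h'‖ :=
      norm_add_le_of_le_of_le ((norm_le_pi_norm h 1).trans (le_max_left _ _))
        ((norm_le_pi_norm h' 1).trans (le_max_right _ _))
    rw [taylorRem_henon, taylorRem_henon]
    refine (pi_norm_le_iff_of_nonneg (by positivity)).2 fun i => ?_
    fin_cases i
    · simp; positivity
    · have : h 1 ^ 2 - h' 1 ^ 2 = (h 1 + h' 1) * (h - h') 1 := by simp; ring
      simp only [Fin.mk_one, Pi.sub_apply, Matrix.cons_val_one, Matrix.cons_val_zero, this,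
        norm_mul]
      exact mul_le_mul hmax (norm_le_pi_norm (h - h') 1) (norm_nonneg _) (by positivity)
  · have : taylorRem (henon b) (henonJac P) P (μ • h) - μ ^ 2 • taylorRem (henon b) (henonJac P) P h
        = 0 := by
      rw [taylorRem_henon, taylorRem_henon]
      ext i
      fin_cases i <;> simp [mul_pow]
    rw [this, norm_zero]
    positivity

theorem norm_sub_le_of_pairMap_toZMod_eq {P P' : Fin 2 → ℤ_[p]}
    (h : pairMap toZMod P = pairMap toZMod P') : ‖P - P'‖ ≤ (p : ℝ)⁻¹ := by
  simp only [pairMap, Prod.mk.injEq] at h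
  refine (pi_norm_le_iff_of_nonneg (by positivity)).2 fun i => ?_
  apply norm_le_inv_of_toZMod_eq_zero
  fin_cases i <;> simp [h.1, h.2]

theorem mapMatrix_toZMod_henonJac (P : Fin 2 → ℤ_[p]) :
    (toZMod : ℤ_[p] →+* ZMod p).mapMatrix (henonJac P) =
      !![0, 1; 1, 2 * (pairMap toZMod P).2] := by
  ext i j
  fin_cases i <;> fin_cases j <;> simp [henonJac, pairMap, map_ofNat]

end HenonPadic

theorem norm_le_one_of_periodic_of_recurrence {K : Type*} [NormedField K] [IsUltrametricDist K]
    {b : K} (hb : ‖b‖ ≤ 1) {y : ℕ → K} (hy : ∀ i, y (i + 2) = y (i + 1) ^ 2 + y i + b) {N : ℕ}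
    (hN : 0 < N) (hper : Periodic y N) (i : ℕ) : ‖y i‖ ≤ 1 := by
  obtain ⟨i₀, -, hmax⟩ := exists_max_image (range N) (fun i => ‖y i‖) ⟨0, mem_range.2 hN⟩
  have hle : ∀ i, ‖y i‖ ≤ ‖y i₀‖ := fun i => by
    rw [← hper.map_mod_nat]; exact hmax _ (mem_range.2 (Nat.mod_lt _ hN))
  refine (hle i).trans (not_lt.1 fun hc => ?_)
  obtain ⟨m, hm⟩ : ∃ m, i₀ + N = m + 1 := ⟨i₀ + N - 1, by omega⟩
  have hsq : ‖y (m + 1) ^ 2‖ = ‖y i₀‖ ^ 2 := by rw [norm_pow, ← hm, hper]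
  have hsmall : ‖y m + b‖ < ‖y (m + 1) ^ 2‖ := by
    rw [hsq]
    exact (norm_add_le_of_le_of_le (hle m) (hb.trans hc.le)).trans_lt (by nlinarith)
  have hnext : ‖y (m + 2)‖ = ‖y i₀‖ ^ 2 := by
    rw [hy, add_assoc, IsUltrametricDist.norm_add_eq_max_of_norm_ne_norm hsmall.ne',
      max_eq_left hsmall.le, hsq]
  nlinarith [hle (m + 2)]

theorem norm_le_one_of_isPeriodicPt {K : Type*} [NormedField K] [IsUltrametricDist K] {b : K}
    (hb : ‖b‖ ≤ 1) {φ : K × K → K × K} (hφ : ∀ P, φ P = (P.2, P.1 + P.2 ^ 2 + b)) {N : ℕ}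
    (hN : 0 < N) {Q : K × K} (hper : IsPeriodicPt φ N Q) : ‖Q.1‖ ≤ 1 ∧ ‖Q.2‖ ≤ 1 := by
  have horbit : ∀ i, ‖(φ^[i] Q).2‖ ≤ 1 :=
    norm_le_one_of_periodic_of_recurrence hb
      (fun i => by simp only [iterate_succ_apply', hφ]; ring) hN
      (fun i => by rw [iterate_add_apply, hper.eq])
  obtain ⟨n, rfl⟩ : ∃ n, N = n + 1 := ⟨N - 1, by omega⟩
  have hQ1 : Q.1 = (φ^[n] Q).2 := by
    conv_lhs => rw [← hper.eq]
    rw [iterate_succ_apply', hφ]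
  exact ⟨hQ1 ▸ horbit n, horbit 0⟩

/-- for `p ≥ 5`, `b ∈ ℤ_p`, and `φ(x,y) = (y, x+y²+b)`, a `ℚ_p`-rational
point `Q` of exact period `N` has integral coordinates, and if its reduction mod `p`
has exact period `M` under the reduced map, and `r` is the order of the multiplier
matrix `Λ = ∏_{i=0}^{M-1} J_{φ̃}(φ̃^{M-1-i}(Q̃))`, then `N = dM` for some divisor `d` of `r`. -/
theorem stmt15 (p : ℕ) [Fact p.Prime] (hp : 5 ≤ p) (b : ℤ_[p])
    (φ : ℚ_[p] × ℚ_[p] → ℚ_[p] × ℚ_[p])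
    (hφ : ∀ P, φ P = (P.2, P.1 + P.2 ^ 2 + (b : ℚ_[p])))
    (Q : ℚ_[p] × ℚ_[p]) (N : ℕ) (hN : 1 ≤ N) (hper : φ^[N] Q = Q)
    (hmin : ∀ m : ℕ, 1 ≤ m → φ^[m] Q = Q → N ≤ m)
    (φt : ZMod p × ZMod p → ZMod p × ZMod p)
    (hφt : ∀ P, φt P = (P.2, P.1 + P.2 ^ 2 + PadicInt.toZMod b)) :
    ‖Q.1‖ ≤ 1 ∧ ‖Q.2‖ ≤ 1 ∧
    ∀ x y : ℤ_[p], ((x : ℚ_[p]), (y : ℚ_[p])) = Q →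
      ∀ M : ℕ, 1 ≤ M →
        φt^[M] (PadicInt.toZMod x, PadicInt.toZMod y) =
          (PadicInt.toZMod x, PadicInt.toZMod y) →
        (∀ m : ℕ, 1 ≤ m →
          φt^[m] (PadicInt.toZMod x, PadicInt.toZMod y) =
            (PadicInt.toZMod x, PadicInt.toZMod y) → M ≤ m) →
        ∀ Λ : Matrix (Fin 2) (Fin 2) (ZMod p),
          Λ = ((List.range M).map (fun i =>
            !![0, 1; 1, 2 * ((φt^[M - 1 - i] (PadicInt.toZMod x, PadicInt.toZMod y)).2)])).prod →
          ∃ d : ℕ, d ∣ orderOf Λ ∧ N = d * M := by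
  obtain ⟨hQ1, hQ2⟩ := norm_le_one_of_isPeriodicPt (b := (b : ℚ_[p])) b.norm_le_one hφ hN hper
  refine ⟨hQ1, hQ2, ?_⟩
  rintro x y hxy M hM hMper hMmin Λ rfl
  set v : Fin 2 → ℤ_[p] := ![x, y]
  have hred : Semiconj (pairMap PadicInt.toZMod) (henon b) φt :=
    semiconj_pairMap_henon PadicInt.toZMod b hφt
  have hvN : minimalPeriod (henon b) v = N := by
    have hv : pairMap PadicInt.Coe.ringHom v = Q := hxy
    rw [← (semiconj_pairMap_henon PadicInt.Coe.ringHom b hφ).minimalPeriod_eq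
      (pairMap_injective Subtype.coe_injective), hv]
    exact IsPeriodicPt.minimalPeriod_eq hN hper hmin
  have hfix := isFixedPt_iterate_mul_orderOf (Q := v) (J' := fun z => !![0, 1; 1, 2 * z.2]) hp
    (hasQuadraticRemainder_henon b) hred
    (fun _ _ => norm_sub_le_of_pairMap_toZMod_eq) mapMatrix_toZMod_henonJac
    (minimalPeriod_pos_iff_mem_periodicPts.1 (hvN ▸ hN)) hMper
  rw [orbitProd_eq_prod_range] at hfix
  have hNdvd : N ∣ M * orderOf _ := hvN ▸ IsPeriodicPt.minimalPeriod_dvd hfix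
  obtain ⟨d, rfl⟩ : M ∣ N :=
    IsPeriodicPt.minimalPeriod_eq hM hMper hMmin ▸
      ((hvN ▸ isPeriodicPt_minimalPeriod (henon b) v).map hred).minimalPeriod_dvd
  exact ⟨d, (Nat.mul_dvd_mul_iff_left hM).1 hNdvd, mul_comm M d⟩
end

section
/- Let φ₁(x,y) = (ay, x + f(y)) be a Hénon map over a field K with f monic of degree d ≥ 2 and a ∈ K*. Then a Hénon map φ₂(x,y) = (ay, x + g(y)) is affine-conjugate to φ₁ (i.e., φ₂ = ψ⁻¹ ∘ φ₁ ∘ ψ for an invertible affine map ψ over K̄) with g monic of degree d if and only if g(y) = δ⁻¹ f(δy + t) + δ⁻¹(a−1)t for some δ, t ∈ K̄ with δ^{d−1} = 1. In particular, when a = 1, for every t ∈ K̄ the map (x,y) ↦ (y, x + f(y + t)) is affine-conjugate to φ₁. -/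
/-!
An affine conjugacy `ψ` between the Hénon maps `(x, y) ↦ (ay, x + g(y))` and `(x, y) ↦ (ay, x + f(y))`
must be diagonal: comparing first coordinates of `ψ ∘ φ₂ = φ₁ ∘ ψ` expresses `β g(y)` as an affine
function of `y`, so `β = 0` because `deg g ≥ 2`, and then `γ = 0`, `α = δ`, `s = a t`. For such a
diagonal `ψ` the second coordinates say exactly `g(z) = δ⁻¹ f(δz + t) + δ⁻¹ (a - 1) t`, and comparing
leading coefficients of the two monic polynomials gives `δ ^ (d - 1) = 1`.
-/

open Polynomial

section Henon

variable {L : Type*} [Field L]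

def henonMap (a : L) (p : L[X]) (P : L × L) : L × L :=
  (a * P.2, P.1 + p.eval P.2)

def affineMap (α β γ δ s t : L) (P : L × L) : L × L :=
  (α * P.1 + β * P.2 + s, γ * P.1 + δ * P.2 + t)

def IsAffineConj (u₁ u₂ : L × L → L × L) : Prop :=
  ∃ α β γ δ s t : L, α * δ - β * γ ≠ 0 ∧
    ∀ P, affineMap α β γ δ s t (u₂ P) = u₁ (affineMap α β γ δ s t P)

theorem Polynomial.natDegree_le_one_of_eval_eq [Infinite L] {p : L[X]} {m c : L}
    (h : ∀ y, p.eval y = m * y + c) : p.natDegree ≤ 1 := by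
  have hp : p = C m * X + C c := Polynomial.funext fun y => by simp [h]
  exact hp ▸ natDegree_linear_le

theorem pow_natDegree_pred_eq_one_of_C_mul_eq_comp {f g : L[X]} (hf : f.Monic) (hg : g.Monic)
    (hd : g.natDegree = f.natDegree) (hpos : 0 < f.natDegree) {δ t c : L} (hδ : δ ≠ 0)
    (h : C δ * g = f.comp (C δ * X + C t) + C c) : δ ^ (f.natDegree - 1) = 1 := by
  have hlin : (C δ * X + C t).natDegree = 1 := natDegree_linear hδ
  have hcomp : (f.comp (C δ * X + C t)).natDegree = f.natDegree := by
    rw [natDegree_comp, hlin, mul_one]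
  have hcoeff := congrArg (coeff · f.natDegree) h
  simp only [coeff_C_mul, coeff_add, coeff_C, if_neg hpos.ne'] at hcoeff
  rw [← hd, hg.coeff_natDegree, hd, ← hcomp, coeff_natDegree, leadingCoeff_comp (by omega),
    hf.leadingCoeff, leadingCoeff_linear hδ, one_mul, mul_one, add_zero] at hcoeff
  have hsucc : δ ^ (f.natDegree - 1) * δ = 1 * δ := by
    rw [← pow_succ, Nat.sub_add_cancel hpos, one_mul, ← hcoeff]
  exact mul_right_cancel₀ hδ hsucc

variable {a : L} {f g : L[X]}

theorem affineMap_henonMap_eq_diagonal [Infinite L] (ha : a ≠ 0) (hg : 2 ≤ g.natDegree)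
    {α β γ δ s t : L}
    (h : ∀ P, affineMap α β γ δ s t (henonMap a g P) = henonMap a f (affineMap α β γ δ s t P)) :
    β = 0 ∧ γ = 0 ∧ α = δ ∧ s = a * t := by
  have e (x y : L) : α * (a * y) + β * (x + g.eval y) + s = a * (γ * x + δ * y + t) :=
    congrArg Prod.fst (h (x, y))
  have hβγ : β = a * γ := by linear_combination e 1 0 - e 0 0
  have hβ : β = 0 := by
    by_contra hβ
    have hlin : ∀ y, g.eval y = β⁻¹ * (a * δ - α * a) * y + β⁻¹ * (a * t - s) := fun y => by
      field_simp
      linear_combination e 0 y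
    have := natDegree_le_one_of_eval_eq hlin
    omega
  have hγ : γ = 0 := (mul_eq_zero.mp (hβγ ▸ hβ)).resolve_left ha
  refine ⟨hβ, hγ, mul_left_cancel₀ ha ?_, ?_⟩
  · linear_combination e 0 1 - e 0 0 - (g.eval 1 - g.eval 0) * hβ
  · linear_combination e 0 0 - g.eval 0 * hβ

theorem affineMap_diagonal_henonMap_iff {δ t : L} (hδ : δ ≠ 0) :
    (∀ P, affineMap δ 0 0 δ (a * t) t (henonMap a g P) =
        henonMap a f (affineMap δ 0 0 δ (a * t) t P)) ↔
      ∀ z, g.eval z = δ⁻¹ * f.eval (δ * z + t) + δ⁻¹ * (a - 1) * t := by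
  simp only [affineMap, henonMap, Prod.ext_iff, zero_mul, add_zero, zero_add]
  refine ⟨fun h z => ?_, fun h P => ⟨by ring, ?_⟩⟩
  · field_simp
    linear_combination (h (0, z)).2
  · rw [h P.2]
    field_simp
    ring

theorem isAffineConj_henonMap_iff [Infinite L] (ha : a ≠ 0) (hf : f.Monic) (hg : g.Monic)
    (hd : g.natDegree = f.natDegree) (h2 : 2 ≤ f.natDegree) :
    IsAffineConj (henonMap a f) (henonMap a g) ↔
      ∃ δ t : L, δ ^ (f.natDegree - 1) = 1 ∧
        ∀ z, g.eval z = δ⁻¹ * f.eval (δ * z + t) + δ⁻¹ * (a - 1) * t := by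
  constructor
  · rintro ⟨α, β, γ, δ, s, t, hdet, h⟩
    obtain ⟨rfl, rfl, rfl, rfl⟩ := affineMap_henonMap_eq_diagonal ha (hd ▸ h2) h
    have hα : α ≠ 0 := fun hα => hdet (by simp [hα])
    have heval := (affineMap_diagonal_henonMap_iff hα).mp h
    have hpoly : C α * g = f.comp (C α * X + C t) + C ((a - 1) * t) :=
      Polynomial.funext fun z => by
        simp only [eval_mul, eval_C, eval_add, eval_comp, eval_X, heval z]
        field_simp
    exact ⟨α, t, pow_natDegree_pred_eq_one_of_C_mul_eq_comp hf hg hd (by omega) hα hpoly, heval⟩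
  · rintro ⟨δ, t, hδ1, heval⟩
    have hδ : δ ≠ 0 := by
      rintro rfl
      simp [zero_pow (show f.natDegree - 1 ≠ 0 by omega)] at hδ1
    exact ⟨δ, 0, 0, δ, a * t, t, by simpa using hδ,
      (affineMap_diagonal_henonMap_iff hδ).mpr heval⟩

theorem isAffineConj_henonMap_one_translate (f : L[X]) (t : L) :
    IsAffineConj (henonMap 1 f) (fun P => (P.2, P.1 + f.eval (P.2 + t))) :=
  ⟨1, 0, 0, 1, t, t, by norm_num, fun P => by simp [affineMap, henonMap, add_right_comm]⟩

end Henon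

/-- Lemma 2.2: the Hénon map `φ₂(x,y) = (ay, x+g(y))` is
affine-conjugate (over the algebraic closure) to `φ₁(x,y) = (ay, x+f(y))` if and
only if `g(y) = δ⁻¹ f(δy+t) + δ⁻¹(a−1)t` for some `δ, t` with `δ^{d−1} = 1`.
In particular, when `a = 1`, every map `(x,y) ↦ (y, x+f(y+t))` is affine-conjugate
to `φ₁`. -/
theorem stmt17 {K L : Type*} [Field K] [Field L] [Algebra K L] [IsAlgClosure K L]
    (d : ℕ) (hd : 2 ≤ d)
    (f g : K[X]) (hf : f.Monic) (hfd : f.natDegree = d)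
    (hg : g.Monic) (hgd : g.natDegree = d)
    (a : K) (ha : a ≠ 0)
    (fL gL : L[X]) (hfL : fL = f.map (algebraMap K L)) (hgL : gL = g.map (algebraMap K L))
    (aL : L) (haL : aL = algebraMap K L a)
    (φ₁ φ₂ : L × L → L × L)
    (hφ₁ : ∀ P, φ₁ P = (aL * P.2, P.1 + fL.eval P.2))
    (hφ₂ : ∀ P, φ₂ P = (aL * P.2, P.1 + gL.eval P.2))
    (Conj : (L × L → L × L) → (L × L → L × L) → Prop)
    (hConj : ∀ u₁ u₂, Conj u₁ u₂ ↔ ∃ α β γ δ s t : L, α * δ - β * γ ≠ 0 ∧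
      ∀ P : L × L,
        (α * (u₂ P).1 + β * (u₂ P).2 + s, γ * (u₂ P).1 + δ * (u₂ P).2 + t) =
          u₁ (α * P.1 + β * P.2 + s, γ * P.1 + δ * P.2 + t)) :
    (Conj φ₁ φ₂ ↔ ∃ δ t : L, δ ^ (d - 1) = 1 ∧
      ∀ z : L, gL.eval z = δ⁻¹ * fL.eval (δ * z + t) + δ⁻¹ * (aL - 1) * t) ∧
    (a = 1 → ∀ t : L, Conj φ₁ (fun P => (P.2, P.1 + fL.eval (P.2 + t)))) := by
  -- supplies `Infinite L`, so polynomials over `L` are determined by their values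
  have : IsAlgClosed L := IsAlgClosure.isAlgClosed K
  have hConj' : Conj = IsAffineConj := funext₂ fun u₁ u₂ => propext (hConj u₁ u₂)
  have hφ₁' : φ₁ = henonMap aL fL := funext hφ₁
  have hφ₂' : φ₂ = henonMap aL gL := funext hφ₂
  subst hConj' hφ₁' hφ₂' hfL hgL haL
  have hfLd : (f.map (algebraMap K L)).natDegree = d := by rw [natDegree_map, hfd]
  have hgLd : (g.map (algebraMap K L)).natDegree = d := by rw [natDegree_map, hgd]
  refine ⟨?_, fun ha1 t => ?_⟩
  · rw [← hfLd]
    exact isAffineConj_henonMap_iff ((_root_.map_ne_zero _).mpr ha) (hf.map _) (hg.map _)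
      (hgLd.trans hfLd.symm) (hfLd ▸ hd)
  · subst ha1
    rw [map_one]
    exact isAffineConj_henonMap_one_translate _ t
end
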